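/- Let C be a coloration of W_τ(X). Then for every class K ⊆ Alg(τ), Mod Id χ_C^A[K] ⊆ CMod CId K. -/

import Mathlib

/-!
Common framework: terms of a fixed type `τ = (ar i)_{i : I}`, algebras,
identities, hypersubstitutions, multi-hypersubstitutions and colorations,
following Denecke–Koppitz–Shtrakov, "Multi-hypersubstitutions and colored
solid varieties".
-/

namespace ColoredSolid

/-- Terms of type `τ` (arities `ar`) over the countably infinite
variable set `X = {x₀, x₁, …}` (variables indexed by `ℕ`). -/
inductive Term (I : Type) (ar : I → ℕ) : Type
  | var : ℕ → Term I ar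
  | app : (i : I) → (Fin (ar i) → Term I ar) → Term I ar

variable {I : Type} {ar : I → ℕ}

/-- The set of (indices of) variables occurring in a term. -/
def Term.varSet : Term I ar → Set ℕ
  | .var n => {n}
  | .app _ ts => ⋃ k, (ts k).varSet

/-- Simultaneous substitution of terms for variables. -/
def subst (θ : ℕ → Term I ar) : Term I ar → Term I ar
  | .var n => θ n
  | .app i ts => .app i fun k => subst θ (ts k)

/-- Pad a `Fin (ar i)`-indexed family of terms to a total substitution. -/
def pad {i : I} (g : Fin (ar i) → Term I ar) : ℕ → Term I ar :=
  fun j => if h : j < ar i then g ⟨j, h⟩ else .var j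

/-- The extension `σ̂` of a hypersubstitution to all terms. -/
def hat (σ : (i : I) → Term I ar) : Term I ar → Term I ar
  | .var n => .var n
  | .app i ts => subst (pad fun k => hat σ (ts k)) (σ i)

/-- A hypersubstitution is proper when each `σ(fᵢ)` is an `nᵢ`-ary term,
i.e. uses only the variables `x₀, …, x_{nᵢ-1}`. -/
def Proper (σ : (i : I) → Term I ar) : Prop :=
  ∀ i, ∀ n ∈ (σ i).varSet, n < ar i

/-- `Hyp I ar` : the hypersubstitutions of type `τ`. -/
def Hyp (I : Type) (ar : I → ℕ) : Type := {σ : (i : I) → Term I ar // Proper σ}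

/-- The identity hypersubstitution (as a raw function). -/
def hypIdFun : (i : I) → Term I ar := fun i => .app i fun k => .var k.val

lemma proper_hypIdFun : Proper (hypIdFun (I := I) (ar := ar)) := by
  intro i n hn
  simp only [hypIdFun, Term.varSet, Set.mem_iUnion, Set.mem_singleton_iff] at hn
  obtain ⟨k, rfl⟩ := hn
  exact k.isLt

/-- The identity hypersubstitution `σ_id`. -/
def hypId : Hyp I ar := ⟨hypIdFun, proper_hypIdFun⟩

lemma varSet_subst (θ : ℕ → Term I ar) (t : Term I ar) :
    (subst θ t).varSet ⊆ ⋃ n ∈ t.varSet, (θ n).varSet := by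
  induction t with
  | var n => simp [subst, Term.varSet]
  | app i ts ih =>
    intro m hm
    simp only [subst, Term.varSet, Set.mem_iUnion] at hm
    obtain ⟨k, hk⟩ := hm
    have := ih k hk
    simp only [Set.mem_iUnion, Term.varSet] at this ⊢
    obtain ⟨n, hn1, hn2⟩ := this
    exact ⟨n, ⟨⟨k, hn1⟩, hn2⟩⟩

lemma varSet_hat {σ : (i : I) → Term I ar} (hσ : Proper σ) :
    ∀ t : Term I ar, (hat σ t).varSet ⊆ t.varSet := by
  intro t
  induction t with
  | var n => simp [hat]
  | app i ts ih =>
    intro m hm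
    rw [hat] at hm
    have hmem := varSet_subst _ _ hm
    simp only [Set.mem_iUnion] at hmem
    obtain ⟨n, hn, hm2⟩ := hmem
    have hlt := hσ i n hn
    simp only [pad, dif_pos hlt] at hm2
    have := ih ⟨n, hlt⟩ hm2
    simp only [Term.varSet, Set.mem_iUnion]
    exact ⟨⟨n, hlt⟩, this⟩

/-- Composition of hypersubstitutions (raw functions): `σ₁ ∘ₕ σ₂`. -/
def hypCompFun (σ₁ σ₂ : (i : I) → Term I ar) : (i : I) → Term I ar := fun i => hat σ₁ (σ₂ i)

lemma proper_hypCompFun {σ₁ σ₂ : (i : I) → Term I ar} (h₁ : Proper σ₁) (h₂ : Proper σ₂) :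
    Proper (hypCompFun σ₁ σ₂) :=
  fun i n hn => h₂ i n (varSet_hat h₁ (σ₂ i) hn)

/-- Composition of hypersubstitutions: `σ₁ ∘ₕ σ₂ := σ̂₁ ∘ σ₂`. -/
def hypComp (σ₁ σ₂ : Hyp I ar) : Hyp I ar :=
  ⟨hypCompFun σ₁.val σ₂.val, proper_hypCompFun σ₁.property σ₂.property⟩

/-- `M` is a submonoid of the monoid `Hyp(τ)` of all hypersubstitutions. -/
def IsSubmonoid (M : Set (Hyp I ar)) : Prop :=
  hypId ∈ M ∧ ∀ σ₁ ∈ M, ∀ σ₂ ∈ M, hypComp σ₁ σ₂ ∈ M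

/-- An algebra of type `τ`: a (nonempty) carrier together with an
`nᵢ`-ary operation for every operation symbol `fᵢ`. -/
structure Alg (I : Type) (ar : I → ℕ) where
  carrier : Type
  nonempty : Nonempty carrier
  op : ∀ i, (Fin (ar i) → carrier) → carrier

/-- Evaluation of a term in an algebra under a valuation of the variables. -/
def Alg.eval (A : Alg I ar) (v : ℕ → A.carrier) : Term I ar → A.carrier
  | .var n => v n
  | .app i ts => A.op i fun k => A.eval v (ts k)

/-- Identities `s ≈ t` are pairs of terms. -/
abbrev Eqn (I : Type) (ar : I → ℕ) := Term I ar × Term I ar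

/-- The identity `e` holds in the algebra `A`. -/
def holds (A : Alg I ar) (e : Eqn I ar) : Prop :=
  ∀ v : ℕ → A.carrier, A.eval v e.1 = A.eval v e.2

/-- `Id K` : the identities holding in every algebra of the class `K`. -/
def IdS (K : Set (Alg I ar)) : Set (Eqn I ar) := {e | ∀ A ∈ K, holds A e}

/-- `Mod Σ` : the class of algebras satisfying every identity of `Σ`. -/
def ModS (E : Set (Eqn I ar)) : Set (Alg I ar) := {A | ∀ e ∈ E, holds A e}

/-- `χ_M^E[Σ] = {σ̂[u] ≈ σ̂[v] | u ≈ v ∈ Σ, σ ∈ M}`. -/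
def chiE (M : Set (Hyp I ar)) (E : Set (Eqn I ar)) : Set (Eqn I ar) :=
  {e | ∃ σ ∈ M, ∃ uv ∈ E, e = (hat σ.val uv.1, hat σ.val uv.2)}

/-- The derived algebra `σ(𝒜)` (same carrier, operations `σ(fᵢ)^𝒜`). -/
noncomputable def derive (σ : (i : I) → Term I ar) (A : Alg I ar) : Alg I ar where
  carrier := A.carrier
  nonempty := A.nonempty
  op i args := A.eval
    (fun j => if h : j < ar i then args ⟨j, h⟩ else Classical.choice A.nonempty) (σ i)

/-- `χ_M^A[K] = {σ(𝒜) | 𝒜 ∈ K, σ ∈ M}`. -/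
def chiA (M : Set (Hyp I ar)) (K : Set (Alg I ar)) : Set (Alg I ar) :=
  {B | ∃ σ ∈ M, ∃ A ∈ K, B = derive σ.val A}

/-- `H_M Id K` : the `M`-hyperidentities of the class `K`. -/
def HId (M : Set (Hyp I ar)) (K : Set (Alg I ar)) : Set (Eqn I ar) :=
  {e | ∀ σ ∈ M, (hat σ.val e.1, hat σ.val e.2) ∈ IdS K}

/-- `H_M Mod Σ` : the algebras `M`-hypersatisfying every identity of `Σ`. -/
def HMod (M : Set (Hyp I ar)) (E : Set (Eqn I ar)) : Set (Alg I ar) :=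
  {A | ∀ σ ∈ M, ∀ uv ∈ E, holds A (hat σ.val uv.1, hat σ.val uv.2)}

/-!  Colorations and multi-hypersubstitutions. -/

/-- `addresses t` : the set of addresses of occurrences of operation symbols
in the term `t` (an address is the list of argument positions leading from
the root to the occurrence). -/
def addresses : Term I ar → Set (List ℕ)
  | .var _ => ∅
  | .app i ts => insert [] (⋃ k : Fin (ar i), (fun l => k.val :: l) '' addresses (ts k))

/-- A coloration `C` of `W_τ(X)` assigns to every term `t` a coloration
`α_t` of its addresses (only the values on `addresses t` matter). -/
def Coloration (I : Type) (ar : I → ℕ) : Type := Term I ar → List ℕ → ℕ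

/-- A multi-hypersubstitution is a map `ρ : ℕ → Hyp(τ)`; here, its
underlying raw function is extended to the subterms of a term, tracking the
address of the current subterm, with colors given by `α`. -/
def mhatAux (ρ : ℕ → (i : I) → Term I ar) (α : List ℕ → ℕ) : List ℕ → Term I ar → Term I ar
  | _, .var n => .var n
  | a, .app i ts =>
      subst (pad fun k => mhatAux ρ α (a ++ [k.val]) (ts k)) (ρ (α a) i)

/-- `ρ̂_C[t]` : application of the multi-hypersubstitution `ρ` to the term
`t`, colored by `C`. -/
def mhat (C : Coloration I ar) (ρ : ℕ → Hyp I ar) (t : Term I ar) : Term I ar :=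
  mhatAux (fun n => (ρ n).val) (C t) [] t

/-- `χ_C^e[Σ] = {ρ̂_C[u] ≈ ρ̂_C[v] | u ≈ v ∈ Σ, ρ ∈ Hyp(τ)^ℕ}`. -/
def chiCe (C : Coloration I ar) (E : Set (Eqn I ar)) : Set (Eqn I ar) :=
  {e | ∃ ρ : ℕ → Hyp I ar, ∃ uv ∈ E, e = (mhat C ρ uv.1, mhat C ρ uv.2)}

/-- The iterates `χ_C^{e,n}` of `χ_C^e` (with `χ_C^{e,0} = χ_C^e`). -/
def chiCiter (C : Coloration I ar) : ℕ → Set (Eqn I ar) → Set (Eqn I ar)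
  | 0, E => chiCe C E
  | n + 1, E => chiCe C (chiCiter C n E)

/-- `χ_C^E[Σ] = ⋃ₙ χ_C^{e,n}[Σ]`. -/
def chiCE (C : Coloration I ar) (E : Set (Eqn I ar)) : Set (Eqn I ar) :=
  ⋃ n, chiCiter C n E

/-- The derived algebra `ρ[𝒜]`, with operations
`fᵢ^{ρ[𝒜]} := (ρ̂_C[fᵢ(x₁,…,x_{nᵢ})])^𝒜`. -/
noncomputable def deriveC (C : Coloration I ar) (ρ : ℕ → Hyp I ar) (A : Alg I ar) :
    Alg I ar where
  carrier := A.carrier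
  nonempty := A.nonempty
  op i args := A.eval
    (fun j => if h : j < ar i then args ⟨j, h⟩ else Classical.choice A.nonempty)
    (mhat C ρ (.app i fun k => .var k.val))

/-- `χ_C^A[K] = {ρ[𝒜] | 𝒜 ∈ K, ρ ∈ Hyp(τ)^ℕ}`. -/
def chiCA (C : Coloration I ar) (K : Set (Alg I ar)) : Set (Alg I ar) :=
  {B | ∃ ρ : ℕ → Hyp I ar, ∃ A ∈ K, B = deriveC C ρ A}

/-- `CMod Σ = {𝒜 | χ_C^E[Σ] ⊆ Id 𝒜}`. -/
def CMod (C : Coloration I ar) (E : Set (Eqn I ar)) : Set (Alg I ar) :=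
  {A | chiCE C E ⊆ {e | holds A e}}

/-- `CId K = {s ≈ t | χ_C^E[{s ≈ t}] ⊆ Id K}`. -/
def CId (C : Coloration I ar) (K : Set (Alg I ar)) : Set (Eqn I ar) :=
  {e | chiCE C {e} ⊆ IdS K}


variable {I : Type} {ar : I → ℕ}

/-!
A colored identity of `K` is in particular a hyperidentity for a single hypersubstitution:
`ρ[𝒜]` only sees the colors at the roots of the terms `fᵢ(x₁,…,x_{nᵢ})`, so it is the
derived algebra `σ(𝒜)` of the hypersubstitution `σ(fᵢ) := ρ(α_{fᵢ(x₁,…,x_{nᵢ})}(root))(fᵢ)`,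
and `σ̂ = ρ̂'_C` for the constant multi-hypersubstitution `ρ' ≡ σ`. Hence `CId K ⊆ Id χ_C^A[K]`.
Moreover `CId K` is closed under `χ_C^E`, because every consequence `ρ̂_C[u] ≈ ρ̂_C[v]` of
`u ≈ v` has its own `χ_C^E`-closure inside that of `u ≈ v`. An algebra satisfying
`Id χ_C^A[K]` therefore satisfies all of `χ_C^E[CId K]`.
-/

lemma eval_subst (A : Alg I ar) (v : ℕ → A.carrier) (θ : ℕ → Term I ar) (t : Term I ar) :
    A.eval v (subst θ t) = A.eval (fun n => A.eval v (θ n)) t := by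
  induction t with
  | var n => rfl
  | app i ts ih => simp only [subst, Alg.eval, ih]

lemma eval_congr (A : Alg I ar) {v w : ℕ → A.carrier} (t : Term I ar)
    (h : ∀ n ∈ t.varSet, v n = w n) : A.eval v t = A.eval w t := by
  induction t with
  | var n => exact h n rfl
  | app i ts ih =>
    simp only [Alg.eval]
    congr 1
    funext k
    exact ih k fun n hn => h n (Set.mem_iUnion.mpr ⟨k, hn⟩)

lemma eval_derive (σ : Hyp I ar) (A : Alg I ar) (v : ℕ → A.carrier) (t : Term I ar) :
    (derive σ.val A).eval v t = A.eval v (hat σ.val t) := by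
  induction t with
  | var n => rfl
  | app i ts ih =>
    change A.eval _ (σ.val i) = A.eval v (subst (pad fun k => hat σ.val (ts k)) (σ.val i))
    rw [eval_subst]
    refine eval_congr A (σ.val i) fun n hn => ?_
    have hlt := σ.property i n hn
    simp only [pad, hlt, ↓reduceDIte]
    exact ih ⟨n, hlt⟩

lemma holds_derive_iff (σ : Hyp I ar) (A : Alg I ar) (e : Eqn I ar) :
    holds (derive σ.val A) e ↔ holds A (hat σ.val e.1, hat σ.val e.2) :=
  forall_congr' fun v => Eq.congr (eval_derive σ A v e.1) (eval_derive σ A v e.2)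

lemma subst_var (t : Term I ar) : subst Term.var t = t := by
  induction t with
  | var n => rfl
  | app i ts ih => simp only [subst, ih]

lemma pad_var (i : I) : pad (fun k : Fin (ar i) => (Term.var k.val : Term I ar)) = Term.var := by
  funext j
  unfold pad
  split <;> rfl

lemma mhat_app_var (C : Coloration I ar) (ρ : ℕ → Hyp I ar) (i : I) :
    mhat C ρ (.app i fun k => .var k.val) = (ρ (C (.app i fun k => .var k.val) [])).val i := by
  simp only [mhat, mhatAux, pad_var, subst_var]

lemma mhatAux_const (σ : (i : I) → Term I ar) (α : List ℕ → ℕ) (a : List ℕ) (t : Term I ar) :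
    mhatAux (fun _ => σ) α a t = hat σ t := by
  induction t generalizing a with
  | var n => rfl
  | app i ts ih => simp only [mhatAux, hat, ih]

lemma mhat_const (C : Coloration I ar) (σ : Hyp I ar) (t : Term I ar) :
    mhat C (fun _ => σ) t = hat σ.val t :=
  mhatAux_const σ.val (C t) [] t

def rootHyp (C : Coloration I ar) (ρ : ℕ → Hyp I ar) : Hyp I ar :=
  ⟨fun i => (ρ (C (.app i fun k => .var k.val) [])).val i,
    fun i => (ρ (C (.app i fun k => .var k.val) [])).property i⟩

lemma deriveC_eq_derive_rootHyp (C : Coloration I ar) (ρ : ℕ → Hyp I ar) (A : Alg I ar) :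
    deriveC C ρ A = derive (rootHyp C ρ).val A := by
  simp only [deriveC, derive, rootHyp, mhat_app_var]

lemma chiCe_mono (C : Coloration I ar) {E F : Set (Eqn I ar)} (h : E ⊆ F) :
    chiCe C E ⊆ chiCe C F := by
  rintro e ⟨ρ, uv, huv, rfl⟩
  exact ⟨ρ, uv, h huv, rfl⟩

lemma chiCiter_mono (C : Coloration I ar) (n : ℕ) {E F : Set (Eqn I ar)} (h : E ⊆ F) :
    chiCiter C n E ⊆ chiCiter C n F := by
  induction n with
  | zero => exact chiCe_mono C h
  | succ n ih => exact chiCe_mono C ih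

lemma chiCiter_succ (C : Coloration I ar) (n : ℕ) (E : Set (Eqn I ar)) :
    chiCiter C (n + 1) E = chiCiter C n (chiCe C E) := by
  induction n with
  | zero => rfl
  | succ n ih => rw [chiCiter, ih, chiCiter]

lemma chiCe_subset_chiCE (C : Coloration I ar) (E : Set (Eqn I ar)) :
    chiCe C E ⊆ chiCE C E :=
  Set.subset_iUnion (fun n => chiCiter C n E) 0

lemma chiCE_singleton_subset_of_mem_chiCe {C : Coloration I ar} {E : Set (Eqn I ar)}
    {e : Eqn I ar} (he : e ∈ chiCe C E) : chiCE C {e} ⊆ chiCE C E :=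
  Set.iUnion_subset fun n =>
    (chiCiter_mono C n (Set.singleton_subset_iff.mpr he)).trans
      ((chiCiter_succ C n E).symm ▸ Set.subset_iUnion (fun m => chiCiter C m E) (n + 1))

lemma chiCe_subset_cId {C : Coloration I ar} {K : Set (Alg I ar)} {S : Set (Eqn I ar)}
    (hS : S ⊆ CId C K) : chiCe C S ⊆ CId C K := by
  rintro e ⟨ρ, uv, huv, rfl⟩
  have he : (mhat C ρ uv.1, mhat C ρ uv.2) ∈ chiCe C {uv} := ⟨ρ, uv, rfl, rfl⟩
  exact (chiCE_singleton_subset_of_mem_chiCe he).trans (hS huv)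

lemma chiCE_cId_subset (C : Coloration I ar) (K : Set (Alg I ar)) :
    chiCE C (CId C K) ⊆ CId C K := by
  refine Set.iUnion_subset fun n => ?_
  induction n with
  | zero => exact chiCe_subset_cId subset_rfl
  | succ n ih => exact chiCe_subset_cId ih

lemma hat_mem_chiCE (C : Coloration I ar) (σ : Hyp I ar) (e : Eqn I ar) :
    (hat σ.val e.1, hat σ.val e.2) ∈ chiCE C {e} :=
  chiCe_subset_chiCE C {e} ⟨fun _ => σ, e, rfl, by simp only [mhat_const]⟩

lemma cId_subset_idS_chiCA (C : Coloration I ar) (K : Set (Alg I ar)) :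
    CId C K ⊆ IdS (chiCA C K) := by
  rintro e he B ⟨ρ, A, hA, rfl⟩
  rw [deriveC_eq_derive_rootHyp, holds_derive_iff]
  exact he (hat_mem_chiCE C (rootHyp C ρ) e) A hA

/-- Proposition 3.15 (i): `Mod Id χ_C^A[K] ⊆ CMod CId K`. -/
theorem mod_id_chiCA_subset_cMod_cId (C : Coloration I ar) (K : Set (Alg I ar)) :
    ModS (IdS (chiCA C K)) ⊆ CMod C (CId C K) :=
  fun _ hA e he => hA e (cId_subset_idS_chiCA C K (chiCE_cId_subset C K he))

end ColoredSolid
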